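/- arXiv:1101.4211 — 3 statements merged into one kernel-verified Lean document; each statement's English description precedes it below -/
import Mathlib

section
/- Let M be a nonempty finite set and w : M → ℝ a weight function (with an element of weight W* = max_{M∈M} w(M)), and define the Gibbs distribution μ(M) = e^{w(M)} / ∑_{M'∈M} e^{w(M')}. Then for any 0 < γ < 1, the probability that a sample M from μ satisfies w(M) ≥ (1−γ)·W* is at least 1 − |M|·e^{−γ·W*}. -/
open scoped BigOperators

/-- Under the Gibbs (product-form) distribution `μ(M) ∝ e^{w(M)}`, a sample has weight
at least `(1-γ)·W*` with probability at least `1 - |M|·e^{-γ W*}`. -/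
theorem gibbs_near_maxweight {M : Type*} [Fintype M] [Nonempty M]
    (w : M → ℝ) (γ : ℝ) (hγ0 : 0 < γ) (hγ1 : γ < 1) :
    (1 : ℝ) - (Fintype.card M : ℝ) * Real.exp (-γ * (⨆ m, w m)) ≤
      ∑ m ∈ Finset.univ.filter (fun m => (1 - γ) * (⨆ m', w m') ≤ w m),
        Real.exp (w m) / ∑ m', Real.exp (w m') := by
  set W : ℝ := ⨆ m, w m with hWdef
  set Z : ℝ := ∑ m', Real.exp (w m') with hZdef
  have hZpos : 0 < Z := Finset.sum_pos (fun i _ => Real.exp_pos _) Finset.univ_nonempty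
  obtain ⟨m0, hm0⟩ : ∃ m0, w m0 = W := exists_eq_ciSup_of_finite
  have hZge : Real.exp W ≤ Z := by
    rw [← hm0]
    exact Finset.single_le_sum (f := fun m => Real.exp (w m))
      (fun i _ => (Real.exp_pos _).le) (Finset.mem_univ m0)
  rw [← Finset.sum_div, le_div_iff₀ hZpos]
  have hsplit := Finset.sum_filter_add_sum_filter_not Finset.univ
    (fun m => (1 - γ) * W ≤ w m) (fun m => Real.exp (w m))
  have hbad : ∑ m ∈ Finset.univ.filter (fun m => ¬ ((1 - γ) * W ≤ w m)),
      Real.exp (w m) ≤ (Fintype.card M : ℝ) * Real.exp ((1 - γ) * W) := by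
    calc ∑ m ∈ Finset.univ.filter (fun m => ¬ ((1 - γ) * W ≤ w m)), Real.exp (w m)
        ≤ ∑ _m ∈ Finset.univ.filter (fun m => ¬ ((1 - γ) * W ≤ w m)),
            Real.exp ((1 - γ) * W) := by
          apply Finset.sum_le_sum
          intro i hi
          exact Real.exp_le_exp.mpr (le_of_lt (not_le.mp (Finset.mem_filter.mp hi).2))
      _ = (Finset.univ.filter (fun m => ¬ ((1 - γ) * W ≤ w m))).card *
            Real.exp ((1 - γ) * W) := by rw [Finset.sum_const, nsmul_eq_mul]
      _ ≤ (Fintype.card M : ℝ) * Real.exp ((1 - γ) * W) := by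
          apply mul_le_mul_of_nonneg_right _ (Real.exp_pos _).le
          exact_mod_cast Finset.card_filter_le _ _
  have hexp : Real.exp ((1 - γ) * W) = Real.exp (-γ * W) * Real.exp W := by
    rw [← Real.exp_add]; ring_nf
  have hcard0 : (0 : ℝ) ≤ (Fintype.card M : ℝ) := Nat.cast_nonneg _
  have h1 : (Fintype.card M : ℝ) * Real.exp ((1 - γ) * W)
      ≤ (Fintype.card M : ℝ) * Real.exp (-γ * W) * Z := by
    rw [hexp, ← mul_assoc]
    exact mul_le_mul_of_nonneg_left hZge (by positivity)
  nlinarith [hbad, h1, hsplit]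
end

section
/- With the setup of the previous statement (finite flows with loop-free routes over finite links), if the flows form a flow-loop (s_1,…,s_N) with witnessing indices i_n < j_n, then the directed graph on links whose edges are the consecutive pairs (l^s_i, l^s_{i+1}) along all routes contains a directed cycle. -/
/-- If the flows form a flow-loop, then the directed graph on links whose edges are the
consecutive pairs along routes contains a directed cycle (a closed walk of positive length). -/
theorem flowLoop_implies_link_cycle {S E : Type*} [Fintype S] [Fintype E]
    (len : S → ℕ) (route : S → ℕ → E)
    (hloopfree : ∀ s, Set.InjOn (route s) (Set.Iio (len s)))
    (N : ℕ) (hN : 2 ≤ N) (s : ZMod N → S) (i j : ZMod N → ℕ)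
    (hij : ∀ n, i n < j n) (hjlen : ∀ n, j n < len (s n))
    (hloop : ∀ n : ZMod N, route (s n) (j n) = route (s (n + 1)) (i (n + 1))) :
    ∃ (m : ℕ) (c : ℕ → E), 1 ≤ m ∧ c m = c 0 ∧
      ∀ p < m, ∃ (s' : S) (idx : ℕ), idx + 1 < len s' ∧
        route s' idx = c p ∧ route s' (idx + 1) = c (p + 1) := by
  classical
  set f : ZMod N × ℕ → ZMod N × ℕ :=
    fun p => if p.2 + 1 < j p.1 then (p.1, p.2 + 1) else (p.1 + 1, i (p.1 + 1)) with hf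
  set st : ZMod N × ℕ := ((0 : ZMod N), i 0) with hst
  have hseg : ∀ d (n : ZMod N) k, k + d < j n → f^[d] (n, k) = (n, k + d) := by
    intro d
    induction d with
    | zero => intro n k _; simp
    | succ d ih =>
      intro n k h
      rw [Function.iterate_succ_apply]
      have hcond : k + 1 < j n := by omega
      have hstep : f (n, k) = (n, k + 1) := by simp [hf, hcond]
      rw [hstep, ih n (k + 1) (by omega)]
      have : k + 1 + d = k + (d + 1) := by omega
      rw [this]
  have hB : ∀ n : ZMod N, f^[j n - i n] (n, i n) = (n + 1, i (n + 1)) := by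
    intro n
    have h1 : i n < j n := hij n
    have h2 : j n - i n = (j n - i n - 1) + 1 := by omega
    rw [h2, Function.iterate_succ_apply',
      hseg (j n - i n - 1) n (i n) (by omega)]
    simp only [hf]
    rw [if_neg (by omega)]
  have hC : ∀ n : ℕ, f^[∑ t ∈ Finset.range n, (j t - i t)] st = ((n : ZMod N), i n) := by
    intro n
    induction n with
    | zero => simp [hst]
    | succ n ih =>
      rw [Finset.sum_range_succ, add_comm, Function.iterate_add_apply, ih, hB]
      push_cast
      rfl
  have hinv : ∀ p : ℕ, (f^[p] st).2 < j (f^[p] st).1 := by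
    intro p
    induction p with
    | zero => simpa [hst] using hij 0
    | succ p ih =>
      rw [Function.iterate_succ_apply']
      by_cases h : (f^[p] st).2 + 1 < j (f^[p] st).1
      · simp only [hf] at h ⊢; simpa [h] using h
      · simp only [hf] at h ⊢; rw [if_neg h]
        exact hij _
  refine ⟨∑ t ∈ Finset.range N, (j t - i t),
    fun p => route (s (f^[p] st).1) ((f^[p] st).2), ?_, ?_, ?_⟩
  · have h0 : 0 < N := by omega
    have h1 : (j ((0 : ℕ) : ZMod N) - i ((0 : ℕ) : ZMod N)) ≤
        ∑ t ∈ Finset.range N, (j (t : ZMod N) - i (t : ZMod N)) :=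
      Finset.single_le_sum (f := fun t : ℕ => j (t : ZMod N) - i (t : ZMod N))
        (fun t _ => Nat.zero_le _) (Finset.mem_range.mpr h0)
    have h2 := hij ((0 : ℕ) : ZMod N)
    omega
  · simp only [hC N]
    simp [hst, ZMod.natCast_self]
  · intro p hp
    refine ⟨s (f^[p] st).1, (f^[p] st).2, ?_, rfl, ?_⟩
    · have h1 := hinv p
      have h2 := hjlen (f^[p] st).1
      omega
    · show _ = route (s (f^[p + 1] st).1) ((f^[p + 1] st).2)
      rw [Function.iterate_succ_apply']
      by_cases h : (f^[p] st).2 + 1 < j (f^[p] st).1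
      · simp only [hf] at h ⊢; simp [h]
      · have heq : (f^[p] st).2 + 1 = j (f^[p] st).1 := by have := hinv p; omega
        simp only [hf] at h heq ⊢; rw [if_neg h]
        rw [heq, hloop]
end

section
/- Every tree network admits no flow-loops: if the undirected graph underlying the link set E is a tree (i.e., connected and acyclic, where each undirected edge may carry links in both directions), and all flow routes are loop-free simple paths in this tree, then no sequence of flows forms a flow-loop, and hence (by the ranking lemma) a monotone rank function on links exists. -/
/-- A sequence of flows forms a flow-loop (cyclically indexed). -/
def HasFlowLoop {S E : Type*} (len : S → ℕ) (route : S → ℕ → E) : Prop :=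
  ∃ N : ℕ, 2 ≤ N ∧ ∃ (s : ZMod N → S) (i j : ZMod N → ℕ),
    (∀ n, i n < j n) ∧ (∀ n, j n < len (s n)) ∧
    (∀ n : ZMod N, route (s n) (j n) = route (s (n + 1)) (i (n + 1)))

/-- The node visited at step `i` (for `i ≤ len s`) along the route of flow `s`. -/
def routeNode {S E V : Type*} (src tgt : E → V) (len : S → ℕ) (route : S → ℕ → E)
    (s : S) (i : ℕ) : V :=
  if i < len s then src (route s i) else tgt (route s (len s - 1))

open SimpleGraph

lemma walk_split_dist {V : Type*} [DecidableEq V] {G : SimpleGraph V} {a b : V} (W : G.Walk a b) (y : V)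
    (hy : y ∈ W.support) : G.dist a y + G.dist y b ≤ W.length := by
  calc G.dist a y + G.dist y b
      ≤ (W.takeUntil y hy).length + (W.dropUntil y hy).length :=
        Nat.add_le_add (G.dist_le _) (G.dist_le _)
    _ = W.length := by rw [← SimpleGraph.Walk.length_append, W.take_spec]

lemma tree_dist_step {V : Type*} [DecidableEq V] {G : SimpleGraph V} (hG : G.IsTree) {u v w x : V}
    (huv : G.Adj u v) (hvw : G.Adj v w) (huw : u ≠ w)
    (h : G.dist x u < G.dist x v) : G.dist x v < G.dist x w := by
  have hconn := hG.isConnected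
  have hduv : G.dist u v = 1 := SimpleGraph.dist_eq_one_iff_adj.mpr huv
  have hdwv : G.dist w v = 1 := SimpleGraph.dist_eq_one_iff_adj.mpr hvw.symm
  have h1 : G.dist x v ≤ G.dist x u + G.dist u v := hconn.dist_triangle
  have hxv : G.dist x v = G.dist x u + 1 := by omega
  by_contra hle
  push_neg at hle
  have h2 : G.dist x v ≤ G.dist x w + G.dist w v := hconn.dist_triangle
  obtain ⟨p, hp, hpl⟩ := hconn.exists_path_of_dist x u
  obtain ⟨q, hq, hql⟩ := hconn.exists_path_of_dist x w
  have hpa : (p.concat huv).IsPath :=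
    (p.concat huv).isPath_of_length_eq_dist (by rw [SimpleGraph.Walk.length_concat, hpl, hxv])
  have hcase : G.dist x w = G.dist x u ∨ G.dist x w = G.dist x v := by omega
  rcases hcase with hw | hw
  · have hqa : (q.concat hvw.symm).IsPath :=
      (q.concat hvw.symm).isPath_of_length_eq_dist
        (by rw [SimpleGraph.Walk.length_concat, hql, hw, hxv])
    obtain ⟨P, -, hU⟩ := hG.existsUnique_path x v
    have heq : p.concat huv = q.concat hvw.symm := by
      rw [hU _ hpa, hU _ hqa]
    have hu : u ∈ (q.concat hvw.symm).support := by
      rw [← heq]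
      simp [SimpleGraph.Walk.support_concat, List.concat_eq_append]
    have hu' : u ∈ q.support := by
      rcases (by simpa [SimpleGraph.Walk.support_concat, List.concat_eq_append] using hu :
        u ∈ q.support ∨ u = v) with h' | h'
      · exact h'
      · exact absurd h' huv.ne
    have := walk_split_dist q u hu'
    rw [hql, hw] at this
    have : G.dist u w = 0 := by omega
    exact huw (hconn.dist_eq_zero_iff.mp this)
  · have hwp : w ∉ (p.concat huv).support := by
      simp only [SimpleGraph.Walk.support_concat, List.concat_eq_append, List.mem_append,
        List.mem_singleton]
      rintro (h' | h')
      · have := walk_split_dist p w h'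
        rw [hpl] at this
        omega
      · exact hvw.ne' h'
    have hpb : ((p.concat huv).concat hvw).IsPath := by
      rw [SimpleGraph.Walk.isPath_def, SimpleGraph.Walk.support_concat]
      rw [List.nodup_append]
      exact ⟨hpa.support_nodup, List.nodup_singleton _,
        by rintro a ha b hb rfl; rw [List.mem_singleton] at hb; subst hb; exact hwp ha⟩
    obtain ⟨P, -, hU⟩ := hG.existsUnique_path x w
    have heq : (p.concat huv).concat hvw = q := by rw [hU _ hpb, hU _ hq]
    have : ((p.concat huv).concat hvw).length = q.length := by rw [heq]
    simp only [SimpleGraph.Walk.length_concat] at this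
    omega

/-- Tree networks admit no flow-loops: if the underlying undirected graph is a tree,
links are directed edges of the tree, and every route is a loop-free simple path,
then no flow-loop exists and hence a monotone rank function on links exists. -/

theorem tree_network_no_flowLoop {V E S : Type*} [Fintype V] [Fintype E] [Fintype S]
    (G : SimpleGraph V) (hG : G.IsTree)
    (src tgt : E → V) (hadj : ∀ e, G.Adj (src e) (tgt e))
    (len : S → ℕ) (route : S → ℕ → E)
    (hlen : ∀ s, 1 ≤ len s)
    (hpath : ∀ s, ∀ i : ℕ, i + 1 < len s → tgt (route s i) = src (route s (i + 1)))
    (hsimple : ∀ s, Set.InjOn (routeNode src tgt len route s) (Set.Iic (len s))) :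
    ¬ HasFlowLoop len route ∧
      ∃ r : E → ℕ, ∀ s, ∀ idx : ℕ, idx + 1 < len s →
        r (route s idx) < r (route s (idx + 1)) := by
  classical
  have hconn := hG.isConnected
  set r : E → ℕ := fun e =>
    (Finset.univ.filter fun x => G.dist x (src e) < G.dist x (tgt e)).card with hr
  -- one step along a route increases the rank
  have hstep : ∀ s, ∀ idx : ℕ, idx + 1 < len s →
      r (route s idx) < r (route s (idx + 1)) := by
    intro s idx hidx
    set u := src (route s idx)
    set v := tgt (route s idx)
    set w := tgt (route s (idx + 1))
    have hv : v = src (route s (idx + 1)) := hpath s idx hidx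
    have huv : G.Adj u v := hadj _
    have hvw : G.Adj v w := by rw [hv]; exact hadj _
    -- u ≠ w by simplicity of the route
    have hn1 : routeNode src tgt len route s idx = u := by
      unfold routeNode; rw [if_pos (by omega)]
    have hn2 : routeNode src tgt len route s (idx + 2) = w := by
      unfold routeNode
      by_cases h2 : idx + 2 < len s
      · rw [if_pos h2, ← hpath s (idx + 1) h2]
      · have : len s = idx + 2 := by omega
        rw [if_neg h2, this]
        norm_num
        rfl
    have huw : u ≠ w := by
      intro h
      have := hsimple s (show idx ∈ Set.Iic (len s) by simp; omega)
        (show idx + 2 ∈ Set.Iic (len s) by simp; omega) (by rw [hn1, hn2, h])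
      omega
    -- strict inclusion of the vertex half-spaces
    apply Finset.card_lt_card
    constructor
    · intro x hx
      simp only [Finset.mem_filter, Finset.mem_univ, true_and] at hx ⊢
      rw [← hv]
      exact tree_dist_step hG huv hvw huw hx
    · intro hsub
      have hvmem : v ∈ Finset.univ.filter
          fun x => G.dist x (src (route s (idx + 1))) < G.dist x (tgt (route s (idx + 1))) := by
        simp only [Finset.mem_filter, Finset.mem_univ, true_and, ← hv]
        rw [SimpleGraph.dist_self]
        exact hconn.pos_dist_of_ne hvw.ne
      have := hsub hvmem
      simp only [Finset.mem_filter, Finset.mem_univ, true_and] at this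
      rw [SimpleGraph.dist_self] at this
      omega
  -- rank increases along any route
  have hchain : ∀ s, ∀ a b : ℕ, a < b → b < len s → r (route s a) < r (route s b) := by
    intro s a b hab hb
    induction b with
    | zero => omega
    | succ b ih =>
      rcases Nat.lt_or_ge a b with h' | h'
      · exact lt_trans (ih h' (by omega)) (hstep s b hb)
      · have : a = b := by omega
        subst this
        exact hstep s a hb
  refine ⟨?_, r, hstep⟩
  rintro ⟨N, hN, s, i, j, hij, hjlen, hloop⟩
  haveI : NeZero N := ⟨by omega⟩
  have hg : ∀ k : ℕ, r (route (s (k : ZMod N)) (i (k : ZMod N))) <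
      r (route (s ((k + 1 : ℕ) : ZMod N)) (i ((k + 1 : ℕ) : ZMod N))) := by
    intro k
    have h1 : r (route (s (k : ZMod N)) (i (k : ZMod N))) <
        r (route (s (k : ZMod N)) (j (k : ZMod N))) :=
      hchain _ _ _ (hij _) (hjlen _)
    have h2 := hloop (k : ZMod N)
    rw [h2] at h1
    have : ((k + 1 : ℕ) : ZMod N) = (k : ZMod N) + 1 := by push_cast; ring
    rw [this]
    exact h1
  have hmono : StrictMono fun k : ℕ => r (route (s (k : ZMod N)) (i (k : ZMod N))) :=
    strictMono_nat_of_lt_succ hg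
  have h0N := hmono (show 0 < N by omega)
  simp only [Nat.cast_zero, ZMod.natCast_self] at h0N
  exact lt_irrefl _ h0N
end
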